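/- Let (V, μ, α) be a Hom-algebra with commutator bracket [x,y] = μ(x,y) − μ(y,x), α-associator a(x,y,z) = μ(μ(x,y),α(z)) − μ(α(x),μ(y,z)), and S(x,y,z) = a(x,y,z) + a(y,z,x) + a(z,x,y). Then (V, μ, α) is Hom-Lie admissible (i.e. the commutator bracket satisfies the Hom-Jacobi identity Σ_cyclic [α(x),[y,z]] = 0) if and only if S(x,y,z) = S(x,z,y) for all x,y,z ∈ V. -/

import Mathlib

namespace HomAlgebra

variable {R V : Type*} [CommSemiring R] [AddCommGroup V] [Module R V]
  (μ : V →ₗ[R] V →ₗ[R] V) (α : V →ₗ[R] V)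

def commutator (x y : V) : V := μ x y - μ y x

def homAssociator (x y z : V) : V := μ (μ x y) (α z) - μ (α x) (μ y z)

def cyclicHomAssociator (x y z : V) : V :=
  homAssociator μ α x y z + homAssociator μ α y z x + homAssociator μ α z x y

theorem jacobiator_commutator_eq (x y z : V) :
    commutator μ (α x) (commutator μ y z) + commutator μ (α y) (commutator μ z x) +
      commutator μ (α z) (commutator μ x y) =
    cyclicHomAssociator μ α x z y - cyclicHomAssociator μ α x y z := by
  simp only [commutator, cyclicHomAssociator, homAssociator, map_sub, LinearMap.sub_apply]
  abel

theorem homJacobi_commutator_iff_cyclicHomAssociator_symm :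
    (∀ x y z : V, commutator μ (α x) (commutator μ y z) + commutator μ (α y) (commutator μ z x) +
      commutator μ (α z) (commutator μ x y) = 0) ↔
    ∀ x y z : V, cyclicHomAssociator μ α x y z = cyclicHomAssociator μ α x z y := by
  simp only [jacobiator_commutator_eq, sub_eq_zero, eq_comm]

end HomAlgebra

open HomAlgebra in
theorem stmt_9_general {K V : Type*} [Field K] [AddCommGroup V] [Module K V]
    (μ : V →ₗ[K] V →ₗ[K] V) (α : V →ₗ[K] V)
    (br : V → V → V) (hbr : ∀ x y : V, br x y = μ x y - μ y x)
    (a : V → V → V → V)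
    (ha : ∀ x y z : V, a x y z = μ (μ x y) (α z) - μ (α x) (μ y z))
    (S : V → V → V → V)
    (hS : ∀ x y z : V, S x y z = a x y z + a y z x + a z x y) :
    (∀ x y z : V, br (α x) (br y z) + br (α y) (br z x) + br (α z) (br x y) = 0) ↔
    (∀ x y z : V, S x y z = S x z y) := by
  obtain rfl : br = commutator μ := funext₂ hbr
  obtain rfl : a = homAssociator μ α := funext₃ ha
  obtain rfl : S = cyclicHomAssociator μ α := funext₃ hS
  exact homJacobi_commutator_iff_cyclicHomAssociator_symm μ α

theorem stmt_9 {K V : Type*} [Field K] [CharZero K] [AddCommGroup V] [Module K V]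
    (μ : V →ₗ[K] V →ₗ[K] V) (α : V →ₗ[K] V)
    (br : V → V → V) (hbr : ∀ x y : V, br x y = μ x y - μ y x)
    (a : V → V → V → V)
    (ha : ∀ x y z : V, a x y z = μ (μ x y) (α z) - μ (α x) (μ y z))
    (S : V → V → V → V)
    (hS : ∀ x y z : V, S x y z = a x y z + a y z x + a z x y) :
    (∀ x y z : V, br (α x) (br y z) + br (α y) (br z x) + br (α z) (br x y) = 0) ↔
    (∀ x y z : V, S x y z = S x z y) :=
  stmt_9_general μ α br hbr a ha S hS
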